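/- Let G be an undirected graph with terminal set T ⊆ V(G), and let s, t be two new nodes. Let H be the undirected graph with vertex set V(G) ∪ {s, t} ∪ {x_v, x'_v : v ∈ T} and edge set E(G) ∪ {{x_v, v}, {x'_v, v}, {x_v, x'_v}, {s, x_v}, {t, x_v} : v ∈ T}. Then a subset F ⊆ E(G) intersects every path in G between two distinct terminals of T (i.e., F is a multiway cut of T in G) if and only if H − F contains no odd-length s–t path. -/

import Mathlib

/-!
An `s`–`t` path in `mwcGraph G T` leaves `s` through some `x_u` with `u ∈ T`. Unless it is
`s x_u t`, of even length, it next enters `G` at `u` (directly or via `x'_u`), and it can leave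
`G` again only through the gadget `x_w` of a terminal `w`; since `x_u` is already used, `w ≠ u`,
so the path contains a `u`–`w` walk of `G`. Conversely, a path of `G` between distinct terminals
`u`, `v` extends to the `s`–`t` path `s x_u (x'_u) u … v x_v t`, and the triangle `x_u x'_u u`
lets us make its length odd.
-/

/-- The graph `H` of the reduction from MultiwayCut to `{s,t}`-OddPathEdgeBlocker.
Vertices: `Sum.inl v` are the vertices of `G`; `s = Sum.inr (Sum.inl false)` and
`t = Sum.inr (Sum.inl true)` are the two new terminals; for `v ∈ T`,
`x_v = Sum.inr (Sum.inr (v, false))` and `x'_v = Sum.inr (Sum.inr (v, true))`.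
Edges: the edges of `G`, together with `{x_v, v}`, `{x'_v, v}`, `{x_v, x'_v}`,
`{s, x_v}` and `{t, x_v}` for every terminal `v ∈ T`. -/
def mwcGraph {V : Type*} (G : SimpleGraph V) (T : Set V) :
    SimpleGraph (V ⊕ Bool ⊕ V × Bool) :=
  SimpleGraph.fromRel (fun a b =>
    match a, b with
    | Sum.inl u, Sum.inl v => G.Adj u v
    | Sum.inr (Sum.inr (v, _)), Sum.inl u => v ∈ T ∧ u = v
    | Sum.inr (Sum.inr (v, false)), Sum.inr (Sum.inr (w, true)) => v ∈ T ∧ v = w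
    | Sum.inr (Sum.inl _), Sum.inr (Sum.inr (v, false)) => v ∈ T
    | _, _ => False)

namespace mwcGraph

open SimpleGraph Walk

local notation "𝐬" => Sum.inr (Sum.inl false)
local notation "𝐭" => Sum.inr (Sum.inl true)
local notation "𝐱" v:max => Sum.inr (Sum.inr (v, false))
local notation "𝐱'" v:max => Sum.inr (Sum.inr (v, true))

variable {V : Type*} {G : SimpleGraph V} {T : Set V}

lemma adj_inl_inl {u v : V} (h : G.Adj u v) : (mwcGraph G T).Adj (Sum.inl u) (Sum.inl v) := by
  simp [mwcGraph, h, h.ne]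

lemma adj_st_x {v : V} (hv : v ∈ T) (β : Bool) :
    (mwcGraph G T).Adj (Sum.inr (Sum.inl β)) (𝐱 v) := by
  simp [mwcGraph, hv]

lemma adj_gadget_inl {v : V} (hv : v ∈ T) (b : Bool) :
    (mwcGraph G T).Adj (Sum.inr (Sum.inr (v, b))) (Sum.inl v) := by
  cases b <;> simp [mwcGraph, hv]

lemma adj_x_x' {v : V} (hv : v ∈ T) : (mwcGraph G T).Adj (𝐱 v) (𝐱' v) := by
  simp [mwcGraph, hv]

lemma adj_inl_cases {a : V} {b : V ⊕ Bool ⊕ V × Bool} (h : (mwcGraph G T).Adj (Sum.inl a) b) :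
    (∃ c, b = Sum.inl c ∧ G.Adj a c) ∨ (a ∈ T ∧ ∃ β, b = Sum.inr (Sum.inr (a, β))) := by
  rcases b with c | γ | ⟨w, _ | _⟩ <;> simp_all [mwcGraph, G.adj_comm _ a]

lemma adj_st_cases {β : Bool} {b : V ⊕ Bool ⊕ V × Bool}
    (h : (mwcGraph G T).Adj (Sum.inr (Sum.inl β)) b) : ∃ v ∈ T, b = 𝐱 v := by
  rcases b with c | γ | ⟨w, _ | _⟩ <;> simp_all [mwcGraph]

lemma adj_x'_cases {v : V} {b : V ⊕ Bool ⊕ V × Bool} (h : (mwcGraph G T).Adj (𝐱' v) b) :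
    b = 𝐱 v ∨ b = Sum.inl v := by
  rcases b with c | γ | ⟨w, _ | _⟩ <;> simp_all [mwcGraph]

lemma adj_x_cases {v : V} {b : V ⊕ Bool ⊕ V × Bool} (h : (mwcGraph G T).Adj (𝐱 v) b) :
    b = Sum.inl v ∨ b = 𝐱' v ∨ ∃ β, b = Sum.inr (Sum.inl β) := by
  rcases b with c | γ | ⟨w, _ | _⟩ <;> simp_all [mwcGraph]

def inlHom (G : SimpleGraph V) (T : Set V) : G →g mwcGraph G T := ⟨Sum.inl, adj_inl_inl⟩

-- Starting at `𝐱' a` is allowed since a walk may step from `a` to `𝐱' a` and back.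
lemma exists_walk_to_terminal {x y : V ⊕ Bool ⊕ V × Bool} (Q : (mwcGraph G T).Walk x y)
    (hy : y = 𝐭) (a : V) (hx : x = Sum.inl a ∨ (a ∈ T ∧ x = 𝐱' a)) :
    ∃ w ∈ T, 𝐱 w ∈ Q.support ∧ ∃ q : G.Walk a w, (q.map (inlHom G T)).edges ⊆ Q.edges := by
  induction Q generalizing a with
  | nil => rcases hx with rfl | ⟨_, rfl⟩ <;> simp at hy
  | cons h Q ih =>
    rcases hx with rfl | ⟨ha, rfl⟩
    · rcases adj_inl_cases h with ⟨c, rfl, hac⟩ | ⟨ha, _ | _, rfl⟩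
      · obtain ⟨w, hw, hxw, q, hq⟩ := ih hy c (Or.inl rfl)
        exact ⟨w, hw, by simp [hxw], cons hac q, List.cons_subset_cons _ hq⟩
      · exact ⟨a, ha, by simp, nil, by simp⟩
      · obtain ⟨w, hw, hxw, q, hq⟩ := ih hy a (Or.inr ⟨ha, rfl⟩)
        exact ⟨w, hw, by simp [hxw], q, List.subset_cons_of_subset _ hq⟩
    · rcases adj_x'_cases h with rfl | rfl
      · exact ⟨a, ha, by simp, nil, by simp⟩
      · obtain ⟨w, hw, hxw, q, hq⟩ := ih hy a (Or.inl rfl)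
        exact ⟨w, hw, by simp [hxw], q, List.subset_cons_of_subset _ hq⟩

lemma exists_walk_between_terminals {u : V} (hu : u ∈ T) (P : (mwcGraph G T).Walk (𝐱 u) 𝐭)
    (hP : P.IsPath) (hs : 𝐬 ∉ P.support) (hlen : P.length ≠ 1) :
    ∃ w ∈ T, w ≠ u ∧ ∃ q : G.Walk u w, (q.map (inlHom G T)).edges ⊆ P.edges := by
  cases P with
  | @cons _ b _ h P =>
    rw [cons_isPath_iff] at hP
    have hb : b = Sum.inl u ∨ (u ∈ T ∧ b = 𝐱' u) := by
      rcases adj_x_cases h with rfl | rfl | ⟨_ | _, rfl⟩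
      · exact Or.inl rfl
      · exact Or.inr ⟨hu, rfl⟩
      · simp at hs
      · simp [(isPath_iff_nil.mp hP.1).length_eq_zero] at hlen
    obtain ⟨w, hw, hxw, q, hq⟩ := exists_walk_to_terminal P rfl u hb
    exact ⟨w, hw, by rintro rfl; exact hP.2 hxw, q, List.subset_cons_of_subset _ hq⟩

def exitWalk {u v : V} (hv : v ∈ T) (p : G.Walk u v) : (mwcGraph G T).Walk (Sum.inl u) 𝐭 :=
  ((p.map (inlHom G T)).concat (adj_gadget_inl hv false).symm).concat (adj_st_x hv true).symm

def stWalk {u v : V} (hu : u ∈ T) (hv : v ∈ T) (p : G.Walk u v) :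
    Bool → (mwcGraph G T).Walk 𝐬 𝐭
  | false => cons (adj_st_x hu false) (cons (adj_gadget_inl hu false) (exitWalk hv p))
  | true => cons (adj_st_x hu false) (cons (adj_x_x' hu)
      (cons (adj_gadget_inl hu true) (exitWalk hv p)))

section
variable {u v : V} (hu : u ∈ T) (hv : v ∈ T) (p : G.Walk u v)

lemma support_exitWalk : (exitWalk hv p).support = p.support.map Sum.inl ++ [𝐱 v, 𝐭] := by
  simp [exitWalk, support_concat, inlHom]

lemma edges_exitWalk :
    (exitWalk hv p).edges = p.edges.map (Sym2.map Sum.inl) ++ [s(Sum.inl v, 𝐱 v), s(𝐱 v, 𝐭)] := by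
  simp [exitWalk, edges_concat, edges_map, inlHom]

-- Not `simp [exitWalk]`: inside `exitWalk` the walk indices `inlHom G T v` and `Sum.inl v` agree
-- only up to unfolding, which blocks `length_concat`.
lemma length_exitWalk : (exitWalk hv p).length = p.length + 2 := by
  simp [← length_edges, edges_exitWalk]

lemma isPath_exitWalk (hp : p.IsPath) : (exitWalk hv p).IsPath :=
  ((hp.map Sum.inl_injective).concat (by simp [inlHom]) _).concat (by simp [inlHom]) _

lemma isPath_stWalk (hp : p.IsPath) (huv : u ≠ v) (b : Bool) : (stWalk hu hv p b).IsPath := by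
  cases b <;> simp [stWalk, isPath_exitWalk hv p hp, support_exitWalk, huv]

lemma length_stWalk (b : Bool) : (stWalk hu hv p b).length = p.length + 4 + b.toNat := by
  cases b <;> simp [stWalk, length_exitWalk]

lemma odd_length_stWalk : Odd (stWalk hu hv p (decide (Even p.length))).length := by
  rw [length_stWalk]
  rcases Nat.even_or_odd p.length with h | h
  · simpa [h] using (h.add (by decide : Even 4)).add_one
  · simpa [Nat.not_even_iff_odd.mpr h] using h.add_even (by decide : Even 4)

lemma mem_edges_of_map_mem_edges_stWalk {e : Sym2 V} {b : Bool}
    (he : e.map Sum.inl ∈ (stWalk hu hv p b).edges) : e ∈ p.edges := by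
  have hinj : Function.Injective (Sym2.map (Sum.inl : V → V ⊕ Bool ⊕ V × Bool)) :=
    Sym2.map.injective Sum.inl_injective
  induction e using Sym2.ind with | _ x y =>
  obtain ⟨a, ha, h⟩ : ∃ a ∈ p.edges, a.map Sum.inl = s(Sum.inl x, Sum.inl y) := by
    cases b <;> simpa [stWalk, edges_exitWalk] using he
  rw [← Sym2.map_mk, hinj.eq_iff] at h
  exact h ▸ ha

end

end mwcGraph

open SimpleGraph Walk mwcGraph in
theorem multiway_cut_iff_no_odd_st_path_general {V : Type*} (G : SimpleGraph V)
    (T : Set V) (F : Set (Sym2 V)) :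
    (∀ u ∈ T, ∀ v ∈ T, u ≠ v → ∀ p : G.Walk u v, p.IsPath →
      ∃ e ∈ F, e ∈ p.edges) ↔
    (∀ p : (mwcGraph G T).Walk (Sum.inr (Sum.inl false)) (Sum.inr (Sum.inl true)),
      p.IsPath → Odd p.length →
      ∃ e ∈ F, e.map (Sum.inl : V → V ⊕ Bool ⊕ V × Bool) ∈ p.edges) := by
  classical
  constructor
  · rintro hcut (_ | ⟨h, P⟩) hP hodd
    obtain ⟨u, hu, rfl⟩ := adj_st_cases h
    rw [cons_isPath_iff] at hP
    have hlen : P.length ≠ 1 := by rintro h1; simp [h1, Nat.odd_iff] at hodd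
    obtain ⟨w, hw, hwu, q, hq⟩ := exists_walk_between_terminals hu P hP.1 hP.2 hlen
    obtain ⟨e, heF, he⟩ := hcut u hu w hw hwu.symm q.bypass q.bypass_isPath
    have he' : e.map Sum.inl ∈ (q.map (inlHom G T)).edges := by
      rw [edges_map]
      exact List.mem_map_of_mem (q.edges_bypass_subset_edges he)
    exact ⟨e, heF, List.mem_cons_of_mem _ (hq he')⟩
  · intro hodd u hu v hv huv p hp
    obtain ⟨e, heF, he⟩ := hodd (stWalk hu hv p (decide (Even p.length)))
      (isPath_stWalk hu hv p hp huv _) (odd_length_stWalk hu hv p)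
    exact ⟨e, heF, mem_edges_of_map_mem_edges_stWalk hu hv p he⟩

/-- **(Reduction from MultiwayCut to `{s,t}`-OddPathEdgeBlocker.)**
A set `F ⊆ E(G)` intersects every path of `G` between two distinct terminals
of `T` (i.e. is a multiway cut of `T` in `G`) iff `H − F` contains no
odd-length `s – t` path; equivalently, iff every odd-length `s – t` path of
`H` uses an edge coming from `F`. -/
theorem multiway_cut_iff_no_odd_st_path {V : Type*} (G : SimpleGraph V)
    (T : Set V) (F : Set (Sym2 V)) (hF : F ⊆ G.edgeSet) :
    (∀ u ∈ T, ∀ v ∈ T, u ≠ v → ∀ p : G.Walk u v, p.IsPath →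
      ∃ e ∈ F, e ∈ p.edges) ↔
    (∀ p : (mwcGraph G T).Walk (Sum.inr (Sum.inl false)) (Sum.inr (Sum.inl true)),
      p.IsPath → Odd p.length →
      ∃ e ∈ F, e.map (Sum.inl : V → V ⊕ Bool ⊕ V × Bool) ∈ p.edges) :=
  multiway_cut_iff_no_odd_st_path_general G T F
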